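/- arXiv:1501.04237 — 2 statements merged into one kernel-verified Lean document; each statement's English description precedes it below -/
import Mathlib

section
/- The set of matrices L ∈ ℝ^{n×n} that are nonsingular but not iteratively nonresonant has n²-dimensional Lebesgue measure zero; consequently, Lebesgue-almost every matrix L ∈ ℝ^{n×n} is nonsingular and iteratively nonresonant. -/
/-!
The zero set of a nonzero real polynomial in finitely many variables is Lebesgue-null: by Fubini,
for almost every value of the other variables the leading coefficient in the first variable does
not vanish, which leaves finitely many roots in that variable. The determinant is such a
polynomial in the entries of `M`. For fixed `N`, `u ≠ 0` and `v`, a coordinate `i₀` of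
`∑ₖ (Mᵀ)^(k+1) uₖ - v` with some `uₖ₀ i₀ ≠ 0` is one too; it does not vanish identically because
at the scalar matrix `t • 1` it is the univariate polynomial `∑ₖ uₖ i₀ t^(k+1) - v i₀`, whose
coefficient of `t^(k₀+1)` is nonzero. The resonant matrices thus form a countable union of null
sets.
-/

open MeasureTheory
open scoped BigOperators

/-- The discrete parallelepiped `P_{a,ℓ} = {x : ℤ^n | a_k ≤ x_k < a_k + ℓ_k}`. -/
noncomputable def Ppd {ι : Type*} [Fintype ι] [DecidableEq ι] (a : ι → ℤ) (l : ι → ℕ) :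
    Finset (ι → ℤ) :=
  Fintype.piFinset fun k => Finset.Ico (a k) (a k + l k)

/-- A bounded function `f : ℤ^n → ℝ` is averageable with average value `c` if
its averages over large discrete parallelepipeds converge to `c`. -/
def IsAveragedTo {ι : Type*} [Fintype ι] [DecidableEq ι]
    (f : (ι → ℤ) → ℝ) (c : ℝ) : Prop :=
  ∀ ε : ℝ, 0 < ε → ∃ N : ℕ, ∀ (a : ι → ℤ) (l : ι → ℕ), (∀ k, N ≤ l k) →
    |((Ppd a l).card : ℝ)⁻¹ * ∑ x ∈ Ppd a l, f x - c| ≤ ε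

/-- A set `A ⊆ ℤ^n` is frequency measurable with frequency `c` if its indicator
function is averageable with average value `c`. -/
def HasFrequency {ι : Type*} [Fintype ι] [DecidableEq ι]
    (A : Set (ι → ℤ)) (c : ℝ) : Prop :=
  IsAveragedTo (Set.indicator A fun _ => (1 : ℝ)) c


/-- A nonsingular matrix `L ∈ ℝ^{n×n}` is iteratively nonresonant if for every `N ≥ 1`
and every nonzero tuple `(u₁,…,u_N) ∈ (ℤ^n)^N` one has `Σ_{k=1}^N (Lᵀ)^k u_k ∉ ℤ^n`. -/
def IterativelyNonresonant {ι : Type*} [Fintype ι] [DecidableEq ι]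
    (L : Matrix ι ι ℝ) : Prop :=
  ∀ N : ℕ, 0 < N → ∀ u : Fin N → ι → ℤ, u ≠ 0 → ∀ v : ι → ℤ,
    (∑ k : Fin N, (L.transpose ^ ((k : ℕ) + 1)).mulVec fun i => (u k i : ℝ)) ≠
      fun i => (v i : ℝ)

open Matrix

theorem Polynomial.ae_eval_ne_zero {K : Type*} [CommRing K] [IsDomain K] [MeasurableSpace K]
    (μ : Measure K) [NullSingletonClass μ] {r : Polynomial K} (hr : r ≠ 0) : ∀ᵐ t ∂μ, r.eval t ≠ 0 := by
  rw [ae_iff]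
  simpa using (Polynomial.finite_setOfPred_isRoot hr).measure_zero μ

theorem ae_of_ae_ae_fin_cons {α : Type*} [MeasureSpace α] [SigmaFinite (volume : Measure α)]
    {m : ℕ} {P : (Fin (m + 1) → α) → Prop} (hP : MeasurableSet {x | P x})
    (h : ∀ᵐ y : Fin m → α, ∀ᵐ t : α, P (Fin.cons t y)) : ∀ᵐ x : Fin (m + 1) → α, P x := by
  have hcons : MeasurableSet {z : α × (Fin m → α) | P (Fin.cons z.1 z.2)} := by
    have := (MeasurableEquiv.piFinSuccAbove (fun _ => α) 0).symm.measurable hP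
    simpa [MeasurableEquiv.piFinSuccAbove_symm_apply, Fin.insertNthEquiv, Fin.insertNth_zero']
      using this
  have hprod : ∀ᵐ z : α × (Fin m → α), P (Fin.cons z.1 z.2) := by
    rw [Measure.volume_eq_prod, Measure.ae_prod_iff_ae_ae hcons]
    exact (Measure.ae_ae_comm (p := fun t y => P (Fin.cons t y)) hcons).2 h
  simpa using
    (volume_preserving_piFinSuccAbove (fun _ => α) 0).quasiMeasurePreserving.ae hprod

theorem MvPolynomial.ae_eval_ne_zero_fin :
    ∀ {m : ℕ} {p : MvPolynomial (Fin m) ℝ}, p ≠ 0 → ∀ᵐ x : Fin m → ℝ, eval x p ≠ 0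
  | 0, p, hp => by
    obtain ⟨a, rfl⟩ := C_surjective (Fin 0) p
    exact ae_of_all _ fun x => by simpa using hp
  | m + 1, p, hp => by
    set q := finSuccEquiv ℝ m p
    have hq : q ≠ 0 := by simpa [q] using hp
    refine ae_of_ae_ae_fin_cons
      (isClosed_eq (continuous_eval p) continuous_const).isOpen_compl.measurableSet ?_
    filter_upwards [ae_eval_ne_zero_fin (Polynomial.leadingCoeff_ne_zero.2 hq)] with y hy
    have hqy : q.map (eval y) ≠ 0 := fun h => hy <| by
      simpa [Polynomial.coeff_map] using congrArg (Polynomial.coeff · q.natDegree) h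
    simpa [eval_eq_eval_mv_eval'] using Polynomial.ae_eval_ne_zero volume hqy

theorem MvPolynomial.ae_eval_ne_zero {σ : Type*} [Fintype σ] {p : MvPolynomial σ ℝ}
    (hp : p ≠ 0) : ∀ᵐ x : σ → ℝ, eval x p ≠ 0 := by
  let e := Fintype.equivFin σ
  have hp' : rename e p ≠ 0 := (rename_injective e e.injective).ne_iff' (map_zero _) |>.2 hp
  have hmp := volume_measurePreserving_piCongrLeft (fun _ : Fin (Fintype.card σ) => ℝ) e
  filter_upwards [hmp.quasiMeasurePreserving.ae (ae_eval_ne_zero_fin hp')] with x hx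
  rwa [eval_rename, show (MeasurableEquiv.piCongrLeft _ e x ∘ e) = x from
    _root_.funext (MeasurableEquiv.piCongrLeft_apply_apply (β := fun _ => ℝ) e x)] at hx

theorem volume_preserving_uncurry (ι κ X : Type*) [Fintype ι] [Fintype κ] [MeasureSpace X]
    [SigmaFinite (volume : Measure X)] :
    MeasurePreserving (MeasurableEquiv.curry ι κ X).symm volume volume := by
  refine ⟨(MeasurableEquiv.curry ι κ X).symm.measurable, (Measure.pi_eq fun s hs => ?_).symm⟩
  rw [Measure.map_apply (MeasurableEquiv.curry ι κ X).symm.measurable (.univ_pi hs),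
    Fintype.prod_prod_type]
  have : (MeasurableEquiv.curry ι κ X).symm ⁻¹' Set.univ.pi s
      = Set.univ.pi fun i => Set.univ.pi fun j => s (i, j) := by
    ext M
    simp [Prod.forall]
  rw [this, volume_pi_pi]
  exact Finset.prod_congr rfl fun i _ => volume_pi_pi _

theorem MvPolynomial.ae_eval_uncurry_ne_zero {ι κ : Type*} [Fintype ι] [Fintype κ]
    {p : MvPolynomial (ι × κ) ℝ} (hp : p ≠ 0) :
    ∀ᵐ M : ι → κ → ℝ, eval (fun ij => M ij.1 ij.2) p ≠ 0 :=
  (volume_preserving_uncurry ι κ ℝ).quasiMeasurePreserving.ae (ae_eval_ne_zero hp)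

theorem MvPolynomial.ae_ne_zero_of_eq_eval_uncurry {ι κ : Type*} [Fintype ι] [Fintype κ]
    {f : (ι → κ → ℝ) → ℝ} (p : MvPolynomial (ι × κ) ℝ)
    (hf : ∀ M, f M = eval (fun ij => M ij.1 ij.2) p) (hf₀ : ∃ M, f M ≠ 0) :
    ∀ᵐ M, f M ≠ 0 := by
  have hp : p ≠ 0 := by
    rintro rfl
    obtain ⟨M, hM⟩ := hf₀
    simp [hf] at hM
  filter_upwards [ae_eval_uncurry_ne_zero hp] with M hM
  rwa [hf]

theorem Matrix.ae_det_ne_zero (ι : Type*) [Fintype ι] [DecidableEq ι] :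
    ∀ᵐ M : ι → ι → ℝ, (of M).det ≠ 0 := by
  filter_upwards [MvPolynomial.ae_eval_uncurry_ne_zero (det_mvPolynomialX_ne_zero ι ℝ)] with M hM
  rwa [eval_det_mvPolynomialX] at hM

theorem exists_sum_mul_pow_succ_ne {N : ℕ} {c : Fin N → ℝ} (hc : c ≠ 0) (a : ℝ) :
    ∃ t : ℝ, ∑ k, c k * t ^ ((k : ℕ) + 1) ≠ a := by
  open Polynomial in
  obtain ⟨k₀, hk₀⟩ := Function.ne_iff.1 hc
  let r : ℝ[X] := ∑ k, C (c k) * X ^ ((k : ℕ) + 1) - C a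
  have hr : r ≠ 0 := fun h => hk₀ <| by
    simpa [r, coeff_X_pow, Fin.val_eq_val] using congrArg (coeff · ((k₀ : ℕ) + 1)) h
  obtain ⟨t, ht⟩ := (ae_eval_ne_zero volume hr).exists
  exact ⟨t, by simpa [r, sub_ne_zero, eval_finsetSum] using ht⟩

theorem Matrix.eval_sum_pow_transpose_mvPolynomialX_mulVec {ι : Type*} [Fintype ι]
    [DecidableEq ι] {N : ℕ} (u : Fin N → ι → ℝ) (M : ι → ι → ℝ) (i : ι) :
    MvPolynomial.eval (fun ij => M ij.1 ij.2)
        ((∑ k : Fin N, ((mvPolynomialX ι ι ℝ)ᵀ ^ ((k : ℕ) + 1)) *ᵥ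
          fun j => MvPolynomial.C (u k j)) i) =
      (∑ k : Fin N, ((of M)ᵀ ^ ((k : ℕ) + 1)) *ᵥ u k) i := by
  let φ := MvPolynomial.eval fun ij : ι × ι => M ij.1 ij.2
  have hX : φ.mapMatrix (mvPolynomialX ι ι ℝ)ᵀ = (of M)ᵀ :=
    congrArg transpose (mvPolynomialX_mapMatrix_eval (of M))
  have hu : ∀ k, (φ ∘ fun j => MvPolynomial.C (u k j)) = u k :=
    fun k => funext fun j => MvPolynomial.eval_C _
  simp only [Finset.sum_apply, map_sum, RingHom.map_mulVec]
  refine Finset.sum_congr rfl fun k _ => ?_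
  rw [← RingHom.mapMatrix_apply, map_pow, hX, hu]

theorem ae_sum_pow_transpose_mulVec_ne {ι : Type*} [Fintype ι] [DecidableEq ι] {N : ℕ}
    {u : Fin N → ι → ℝ} (hu : u ≠ 0) (v : ι → ℝ) :
    ∀ᵐ M : ι → ι → ℝ, ∑ k : Fin N, ((of M)ᵀ ^ ((k : ℕ) + 1)) *ᵥ u k ≠ v := by
  obtain ⟨k₀, hk₀⟩ := Function.ne_iff.1 hu
  obtain ⟨i₀, hi₀⟩ := Function.ne_iff.1 hk₀
  obtain ⟨t, ht⟩ := exists_sum_mul_pow_succ_ne (c := fun k => u k i₀)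
    (Function.ne_iff.2 ⟨k₀, hi₀⟩) (v i₀)
  have hscalar : (∑ k : Fin N, ((of (of.symm (t • 1)))ᵀ ^ ((k : ℕ) + 1)) *ᵥ u k) i₀
      = ∑ k : Fin N, u k i₀ * t ^ ((k : ℕ) + 1) := by
    simp [smul_pow, smul_mulVec, mul_comm]
  have hf := MvPolynomial.ae_ne_zero_of_eq_eval_uncurry
    (f := fun M => (∑ k : Fin N, ((of M)ᵀ ^ ((k : ℕ) + 1)) *ᵥ u k) i₀ - v i₀)
    ((∑ k : Fin N, ((mvPolynomialX ι ι ℝ)ᵀ ^ ((k : ℕ) + 1)) *ᵥ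
          fun j => MvPolynomial.C (u k j)) i₀ - MvPolynomial.C (v i₀))
    (fun M => by rw [map_sub, MvPolynomial.eval_C, eval_sum_pow_transpose_mvPolynomialX_mulVec])
    ⟨_, sub_ne_zero.2 (hscalar ▸ ht)⟩
  filter_upwards [hf] with M hM h
  exact hM (by rw [h, sub_self])

theorem ae_iterativelyNonresonant (ι : Type*) [Fintype ι] [DecidableEq ι] :
    ∀ᵐ M : ι → ι → ℝ, IterativelyNonresonant (of M) := by
  have hres : ∀ᵐ M : ι → ι → ℝ, ∀ (N : ℕ) (u : Fin N → ι → ℤ) (v : ι → ℤ), u ≠ 0 →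
      ∑ k : Fin N, ((of M)ᵀ ^ ((k : ℕ) + 1)) *ᵥ (fun i => (u k i : ℝ)) ≠ fun i => (v i : ℝ) := by
    refine ae_all_iff.2 fun N => ae_all_iff.2 fun u => ae_all_iff.2 fun v => ?_
    by_cases hu : u = 0
    · exact ae_of_all _ fun _ h => absurd hu h
    have hu' : (fun k i => (u k i : ℝ)) ≠ 0 := fun h =>
      hu <| funext fun k => funext fun i => by simpa using congrFun (congrFun h k) i
    filter_upwards [ae_sum_pow_transpose_mulVec_ne hu' fun i => (v i : ℝ)] with M hM _ using hM
  filter_upwards [hres] with M hM N _ u hu v using hM N u v hu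

/-- the set of matrices `L ∈ ℝ^{n×n}` that are nonsingular but not
iteratively nonresonant has Lebesgue measure zero; consequently, almost every
`L ∈ ℝ^{n×n}` is nonsingular and iteratively nonresonant. -/
theorem stmt9 (n : ℕ) :
    volume {M : Fin n → Fin n → ℝ |
      (Matrix.of M).det ≠ 0 ∧ ¬ IterativelyNonresonant (Matrix.of M)} = 0 ∧
    ∀ᵐ M ∂(volume : Measure (Fin n → Fin n → ℝ)),
      (Matrix.of M).det ≠ 0 ∧ IterativelyNonresonant (Matrix.of M) := by
  have hgood := (ae_det_ne_zero (Fin n)).and (ae_iterativelyNonresonant (Fin n))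
  refine ⟨measure_mono_null ?_ (ae_iff.1 hgood), hgood⟩
  exact fun M hM hM' => hM.2 hM'.2
end

section
/- Let R : ℝ^n → ℤ^n be a quantizer, L ∈ ℝ^{n×n} a nonsingular matrix, and T := R ∘ L the transition operator of the quantized linear (R,L)-system. Then for every m ∈ ℕ, every set G ⊆ ℝ^m and every matrix Λ ∈ ℝ^{m×n}, the preimage of the quasiperiodic set Q_m(G,Λ) under T satisfies T⁻¹(Q_m(G,Λ)) = Q_{n+m}(({0}×G) + {(v, Λv) : v ∈ R⁻¹(0)}, [I_n; Λ]·L), where {0}×G ⊆ ℝ^{n+m}, the sum is the Minkowski sum in ℝ^{n+m}, and [I_n; Λ]·L ∈ ℝ^{(n+m)×n} is the matrix with blocks L and ΛL stacked vertically. -/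
open MeasureTheory
open scoped BigOperators

/-- A bounded set `G ⊆ ℝ^m` is Jordan measurable if its topological boundary has
Lebesgue measure zero. -/
def JordanMeasurable {ι : Type*} [Fintype ι] (G : Set (ι → ℝ)) : Prop :=
  Bornology.IsBounded G ∧ volume (frontier G) = 0

/-- A matrix `Λ ∈ ℝ^{m×n}` is nonresonant if `Λᵀu ∉ ℤ^n` for every nonzero `u ∈ ℤ^m`. -/
def Nonresonant {ι κ : Type*} [Fintype ι] [Fintype κ] (Λ : Matrix ι κ ℝ) : Prop :=
  ∀ u : ι → ℤ, u ≠ 0 → ∀ v : κ → ℤ,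
    Matrix.vecMul (fun i => (u i : ℝ)) Λ ≠ fun j => (v j : ℝ)

/-- The quasiperiodic set `Q_m(G,Λ) = {x ∈ ℤ^n : Λx ∈ G + ℤ^m}`. -/
def QSet {ι κ : Type*} [Fintype ι] [Fintype κ] (Λ : Matrix ι κ ℝ)
    (G : Set (ι → ℝ)) : Set (κ → ℤ) :=
  {x | ∃ z : ι → ℤ, ((Λ.mulVec fun k => (x k : ℝ)) - fun i => (z i : ℝ)) ∈ G}


/-- A quantizer is a map `R : ℝ^n → ℤ^n` commuting with integer translations and
whose cell `R⁻¹(0)` is Jordan measurable. -/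
def IsQuantizer {ι : Type*} [Fintype ι] (R : (ι → ℝ) → ι → ℤ) : Prop :=
  (∀ (u : ι → ℝ) (z : ι → ℤ), R (u + fun i => (z i : ℝ)) = R u + z) ∧
  JordanMeasurable {u : ι → ℝ | R u = 0}

/-- The transition operator `T = R ∘ L` of the quantized linear `(R,L)`-system. -/
def Tq {ι : Type*} [Fintype ι] (R : (ι → ℝ) → ι → ℤ) (L : Matrix ι ι ℝ) :
    (ι → ℤ) → ι → ℤ :=
  fun x => R (L.mulVec fun i => (x i : ℝ))

open scoped Pointwise

/-!
Since `R` commutes with integer translations, `R y = k` for `k ∈ ℤ^n` exactly when `y - k`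
lies in the cell `R⁻¹(0)`. With `y = L x` and an integer vector `(k, z) ∈ ℤ^{n+m}`,
`[I_n; Λ] L x - (k, z) = (y - k, Λ (y - k) + (Λ k - z))`, which lies in
`({0} × G) + {(v, Λ v) : v ∈ R⁻¹(0)}` iff `y - k ∈ R⁻¹(0)` and `Λ k - z ∈ G`,
that is, iff `k = T x` and `Λ (T x) - z ∈ G`.
-/

open Matrix

theorem Sum.exists_arrow {α β γ : Type*} {p : (α ⊕ β → γ) → Prop} :
    (∃ f, p f) ↔ ∃ a b, p (Sum.elim a b) :=
  ⟨fun ⟨f, hf⟩ => ⟨f ∘ Sum.inl, f ∘ Sum.inr, by rwa [Sum.elim_comp_inl_inr]⟩,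
    fun ⟨a, b, h⟩ => ⟨_, h⟩⟩

section

variable {ι κ : Type*}

theorem eq_iff_apply_sub_intCast_eq_zero {R : (ι → ℝ) → ι → ℤ}
    (hR : ∀ (u : ι → ℝ) (z : ι → ℤ), R (u + fun i => (z i : ℝ)) = R u + z)
    (u : ι → ℝ) (z : ι → ℤ) : R u = z ↔ R (u - fun i => (z i : ℝ)) = 0 := by
  have hu : R u = R (u - fun i => (z i : ℝ)) + z := by
    rw [← hR, sub_add_cancel]
  rw [hu, add_eq_right]

variable (ι) in
/-- `{0} × G`, with `ℝ^ι × ℝ^κ` identified with `ℝ^(ι ⊕ κ)`. -/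
def zeroProd (G : Set (κ → ℝ)) : Set (ι ⊕ κ → ℝ) :=
  {w | (∀ i, w (Sum.inl i) = 0) ∧ (fun j => w (Sum.inr j)) ∈ G}

def graphOn [Fintype ι] (Λ : Matrix κ ι ℝ) (C : Set (ι → ℝ)) : Set (ι ⊕ κ → ℝ) :=
  {w | ∃ v ∈ C, (∀ i, w (Sum.inl i) = v i) ∧ ∀ j, w (Sum.inr j) = (Λ *ᵥ v) j}

theorem sumElim_mem_zeroProd_add_graphOn_iff [Fintype ι] {G : Set (κ → ℝ)}
    {Λ : Matrix κ ι ℝ} {C : Set (ι → ℝ)} {u : ι → ℝ} {b : κ → ℝ} :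
    Sum.elim u (Λ *ᵥ u + b) ∈ zeroProd ι G + graphOn Λ C ↔ u ∈ C ∧ b ∈ G := by
  constructor
  · rintro ⟨a, ⟨ha0, haG⟩, c, ⟨v, hvC, hcl, hcr⟩, hac⟩
    have hvu : v = u := funext fun i => by
      simpa [ha0, hcl] using congrFun hac (Sum.inl i)
    subst hvu
    refine ⟨hvC, ?_⟩
    convert haG using 1
    funext j
    have h := congrFun hac (Sum.inr j)
    simp only [Pi.add_apply, Sum.elim_inr, hcr] at h
    linarith
  · rintro ⟨hu, hb⟩
    refine ⟨Sum.elim 0 b, ⟨fun i => rfl, hb⟩, Sum.elim u (Λ *ᵥ u),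
      ⟨u, hu, fun i => rfl, fun j => rfl⟩, ?_⟩
    change Sum.elim (0 : ι → ℝ) b + Sum.elim u (Λ *ᵥ u) = _
    rw [← Sum.elim_add_add, zero_add, add_comm b]

theorem preimage_Tq_QSet [Fintype ι] [Fintype κ] [DecidableEq ι]
    {R : (ι → ℝ) → ι → ℤ}
    (hR : ∀ (u : ι → ℝ) (z : ι → ℤ), R (u + fun i => (z i : ℝ)) = R u + z)
    (L : Matrix ι ι ℝ) (G : Set (κ → ℝ)) (Λ : Matrix κ ι ℝ) :
    Tq R L ⁻¹' QSet Λ G =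
      QSet (fromRows 1 Λ * L) (zeroProd ι G + graphOn Λ {v | R v = 0}) := by
  ext x
  set y : ι → ℝ := L *ᵥ fun i => (x i : ℝ)
  have hrows : (fromRows 1 Λ * L) *ᵥ (fun i => (x i : ℝ)) = Sum.elim y (Λ *ᵥ y) := by
    rw [← mulVec_mulVec, fromRows_mulVec, one_mulVec]
  have hshift (k : ι → ℤ) (z : κ → ℤ) :
      (Sum.elim y (Λ *ᵥ y) - fun s => ((Sum.elim k z s : ℤ) : ℝ)) =
        Sum.elim (y - fun i => (k i : ℝ))
          (Λ *ᵥ (y - fun i => (k i : ℝ)) +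
            ((Λ *ᵥ fun i => (k i : ℝ)) - fun j => (z j : ℝ))) := by
    funext s
    cases s <;> simp [mulVec_sub]
  calc x ∈ Tq R L ⁻¹' QSet Λ G
      ↔ ∃ z : κ → ℤ, ((Λ *ᵥ fun i => (R y i : ℝ)) - fun j => (z j : ℝ)) ∈ G :=
        Iff.rfl
    _ ↔ ∃ (k : ι → ℤ) (z : κ → ℤ), R y = k ∧
          ((Λ *ᵥ fun i => (k i : ℝ)) - fun j => (z j : ℝ)) ∈ G :=
      ⟨fun ⟨z, h⟩ => ⟨_, z, rfl, h⟩, fun ⟨_, z, hk, h⟩ => ⟨z, hk ▸ h⟩⟩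
    _ ↔ ∃ (k : ι → ℤ) (z : κ → ℤ), R (y - fun i => (k i : ℝ)) = 0 ∧
          ((Λ *ᵥ fun i => (k i : ℝ)) - fun j => (z j : ℝ)) ∈ G :=
      exists_congr fun k => exists_congr fun _ =>
        and_congr_left' (eq_iff_apply_sub_intCast_eq_zero hR y k)
    _ ↔ ∃ ζ : ι ⊕ κ → ℤ, (Sum.elim y (Λ *ᵥ y) - fun s => (ζ s : ℝ)) ∈
          zeroProd ι G + graphOn Λ {v | R v = 0} := by
      simp only [Sum.exists_arrow, hshift, sumElim_mem_zeroProd_add_graphOn_iff, Set.mem_ofPred_eq]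
    _ ↔ x ∈ QSet (fromRows 1 Λ * L) (zeroProd ι G + graphOn Λ {v | R v = 0}) := by
      rw [QSet, Set.mem_ofPred_eq, hrows]

end

theorem stmt10_general (n m : ℕ) (R : (Fin n → ℝ) → Fin n → ℤ) (hR : IsQuantizer R)
    (L : Matrix (Fin n) (Fin n) ℝ)
    (G : Set (Fin m → ℝ)) (Λ : Matrix (Fin m) (Fin n) ℝ) :
    Tq R L ⁻¹' QSet Λ G =
      QSet (Matrix.fromRows (1 : Matrix (Fin n) (Fin n) ℝ) Λ * L)
        ({w : Fin n ⊕ Fin m → ℝ |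
            (∀ i, w (Sum.inl i) = 0) ∧ (fun j => w (Sum.inr j)) ∈ G} +
         {w : Fin n ⊕ Fin m → ℝ | ∃ v : Fin n → ℝ, R v = 0 ∧
            (∀ i, w (Sum.inl i) = v i) ∧ ∀ j, w (Sum.inr j) = Λ.mulVec v j}) :=
  preimage_Tq_QSet hR.1 L G Λ

/-- the preimage of a quasiperiodic set `Q_m(G,Λ)` under the transition
operator `T = R ∘ L` is the quasiperiodic set
`Q_{n+m}(({0}×G) + {(v,Λv) : v ∈ R⁻¹(0)}, [I_n; Λ]·L)`. -/
theorem stmt10 (n m : ℕ) (R : (Fin n → ℝ) → Fin n → ℤ) (hR : IsQuantizer R)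
    (L : Matrix (Fin n) (Fin n) ℝ) (hL : L.det ≠ 0)
    (G : Set (Fin m → ℝ)) (Λ : Matrix (Fin m) (Fin n) ℝ) :
    Tq R L ⁻¹' QSet Λ G =
      QSet (Matrix.fromRows (1 : Matrix (Fin n) (Fin n) ℝ) Λ * L)
        ({w : Fin n ⊕ Fin m → ℝ |
            (∀ i, w (Sum.inl i) = 0) ∧ (fun j => w (Sum.inr j)) ∈ G} +
         {w : Fin n ⊕ Fin m → ℝ | ∃ v : Fin n → ℝ, R v = 0 ∧
            (∀ i, w (Sum.inl i) = v i) ∧ ∀ j, w (Sum.inr j) = Λ.mulVec v j}) :=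
  stmt10_general n m R hR L G Λ
end
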